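/- Let a ∈ ℝ and, for ĥ, k ∈ ℂ with a·ĥ ≠ 1 and ĥ ≠ 1, set Γ = (1 − (1/2)·k² − 2a·ĥ + a²·ĥ²)/((1 − a·ĥ)²·(1 − ĥ)), Σ1 = k/((1 − a·ĥ)·(1 − ĥ)), Σ2 = (1/2)·k²/((1 − a·ĥ)²·(1 − ĥ)) (these are the class X quantities with a1 = a2 = a, a3 = 1, a4 = 0, for which the terms involving b and a4 vanish). Then the mean-square stability function R̂(ĥ,k) = |Γ|² + Γ·conj(Σ2) + conj(Γ)·Σ2 + |Σ1|² + 3·|Σ2|² satisfies the identity R̂(ĥ,k) = (|a·ĥ − 1|⁴ + (1/2)·|k|⁴ + |k|²·|a·ĥ − 1|²)/(|a·ĥ − 1|⁴·|ĥ − 1|²), i.e. it coincides with the class II stability function, and consequently R̂(ĥ,k) < 1 holds for all ĥ, k ∈ ℂ with 2·Re(ĥ) + |k|² < 0 and a·ĥ ≠ 1 if and only if a ≥ 1/4. -/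

import Mathlib

/-!
Since `Γ + Σ₂ = 1 / (1 - ĥ)`, the stability function is `|Γ + Σ₂|² + |Σ₁|² + 2|Σ₂|²`, which
gives the closed form. Put `M = |aĥ - 1|²`, `u = -Re ĥ` and `s = |k|² < 2u`; then `R̂ < 1`
means `M² + sM + s²/2 < M²|ĥ - 1|²`. For `a ≥ 1/4` we have `M ≥ (1 + au)² ≥ 1 + u/2`, and then
`M² + sM + s²/2 < M² + 2uM + 2u² ≤ M²(1 + u)² ≤ M²|ĥ - 1|²`. For `a < 1/4`, along `ĥ = -u`,
`|k|² = 2u - u³` the gap `M² + sM + s²/2 - M²(1 + u)²` equals `u² Q(u)` with `Q` a polynomial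
and `Q(0) = 1 - 4a > 0`, so it is nonnegative for small `u > 0`.
-/

open ComplexConjugate

/-- Γ for the class X scheme with a1 = a2 = a, a3 = 1, a4 = 0 (the terms
involving b and a4 vanish). -/
noncomputable def GammaX (a : ℝ) (h k : ℂ) : ℂ :=
  (1 - (1/2) * k^2 - 2 * (a : ℂ) * h + (a : ℂ)^2 * h^2)
    / ((1 - (a : ℂ) * h)^2 * (1 - h))

/-- Σ1 for the class X scheme with a1 = a2 = a, a3 = 1, a4 = 0. -/
noncomputable def Sigma1X (a : ℝ) (h k : ℂ) : ℂ :=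
  k / ((1 - (a : ℂ) * h) * (1 - h))

/-- Σ2 for the class X scheme with a1 = a2 = a, a3 = 1, a4 = 0. -/
noncomputable def Sigma2X (a : ℝ) (h k : ℂ) : ℂ :=
  (1/2) * k^2 / ((1 - (a : ℂ) * h)^2 * (1 - h))

/-- The mean-square stability function
R̂ = |Γ|² + Γ·conj(Σ2) + conj(Γ)·Σ2 + |Σ1|² + 3·|Σ2|² of the class X scheme
with a1 = a2 = a, a3 = 1, a4 = 0. -/
noncomputable def RhatX (a : ℝ) (h k : ℂ) : ℂ :=
  (‖GammaX a h k‖^2 : ℝ) + GammaX a h k * conj (Sigma2X a h k)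
    + conj (GammaX a h k) * Sigma2X a h k + (‖Sigma1X a h k‖^2 : ℝ)
    + 3 * (‖Sigma2X a h k‖^2 : ℝ)

open Filter Topology

lemma mean_square_stability_eq_norm_sq (γ σ₁ σ₂ : ℂ) :
    (‖γ‖ ^ 2 : ℝ) + γ * conj σ₂ + conj γ * σ₂ + (‖σ₁‖ ^ 2 : ℝ) + 3 * (‖σ₂‖ ^ 2 : ℝ)
      = ((‖γ + σ₂‖ ^ 2 + ‖σ₁‖ ^ 2 + 2 * ‖σ₂‖ ^ 2 : ℝ) : ℂ) := by
  push_cast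
  rw [← Complex.mul_conj' (γ + σ₂), ← Complex.mul_conj' γ, ← Complex.mul_conj' σ₁,
    ← Complex.mul_conj' σ₂, map_add]
  ring

lemma GammaX_add_Sigma2X (a : ℝ) {h : ℂ} (k : ℂ) (hah : (a : ℂ) * h ≠ 1) :
    GammaX a h k + Sigma2X a h k = (1 - h)⁻¹ := by
  have hA : (1 - (a : ℂ) * h) ^ 2 ≠ 0 := pow_ne_zero 2 (sub_ne_zero.2 hah.symm)
  rw [GammaX, Sigma2X, ← add_div, ← div_mul_cancel_left₀ hA (1 - h)]
  congr 1
  ring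

theorem RhatX_eq (a : ℝ) {h : ℂ} (k : ℂ) (hah : (a : ℂ) * h ≠ 1) :
    RhatX a h k
      = (((‖(a : ℂ) * h - 1‖ ^ 4 + (1/2) * ‖k‖ ^ 4 + ‖k‖ ^ 2 * ‖(a : ℂ) * h - 1‖ ^ 2)
          / (‖(a : ℂ) * h - 1‖ ^ 4 * ‖h - 1‖ ^ 2) : ℝ) : ℂ) := by
  rw [RhatX, mean_square_stability_eq_norm_sq, GammaX_add_Sigma2X a k hah]
  congr 1
  have hA : ‖(a : ℂ) * h - 1‖ ≠ 0 := by simpa [sub_eq_zero] using hah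
  simp only [Sigma1X, Sigma2X, norm_inv, norm_div, norm_mul, norm_pow, norm_sub_rev (1 : ℂ),
    norm_one, Complex.norm_two]
  generalize ‖(a : ℂ) * h - 1‖ = A at hA ⊢
  generalize ‖h - 1‖ = B
  rcases eq_or_ne B 0 with hB | hB
  · simp [hB]
  · field_simp
    ring

lemma stability_numerator_lt_denominator {M B u s : ℝ} (hM : 1 + u / 2 ≤ M)
    (hB : (1 + u) ^ 2 ≤ B) (hu : 0 < u) (hs : 0 ≤ s) (hsu : s < 2 * u) :
    M ^ 2 + (1/2) * s ^ 2 + s * M < M ^ 2 * B := by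
  have hM1 : 1 ≤ M := by linarith
  calc M ^ 2 + (1/2) * s ^ 2 + s * M < M ^ 2 + 2 * u ^ 2 + 2 * u * M := by nlinarith
    _ ≤ M ^ 2 * (1 + u) ^ 2 := by
      have h1 : u ≤ 2 * M * (M - 1) := by nlinarith
      have h2 : 1 ≤ M ^ 2 := by nlinarith
      nlinarith [mul_le_mul_of_nonneg_left h1 hu.le, mul_le_mul_of_nonneg_left h2 (sq_nonneg u)]
    _ ≤ M ^ 2 * B := by gcongr

lemma exists_stability_denominator_le_numerator {a : ℝ} (ha : a < 1/4) :
    ∃ u : ℝ, 0 < u ∧ u ^ 2 ≤ 2 ∧ -1 < a * u ∧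
      ((1 + a * u) ^ 2) ^ 2 * (1 + u) ^ 2
        ≤ ((1 + a * u) ^ 2) ^ 2 + (1/2) * (2 * u - u ^ 3) ^ 2
          + (2 * u - u ^ 3) * (1 + a * u) ^ 2 := by
  set Q : ℝ → ℝ := fun u ↦ (2 - u ^ 2) ^ 2 / 2
    - (1 + u * (2 * a + a ^ 2 * u)) * (1 + 2 * (2 * a + a ^ 2 * u) + u * (1 + 2 * a + a ^ 2 * u))
  have hQ_pos : ∀ᶠ u in 𝓝 0, 0 < Q u :=
    continuousAt_const.eventually_lt (by fun_prop) (by simp only [Q]; linarith)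
  have hu_sq : ∀ᶠ u : ℝ in 𝓝 0, u ^ 2 < 2 :=
    (continuousAt_id.pow 2).eventually_lt continuousAt_const (by norm_num)
  have hau : ∀ᶠ u in 𝓝 0, -1 < a * u :=
    continuousAt_const.eventually_lt (by fun_prop) (by simp)
  obtain ⟨u, ⟨hQu, hu2, hau⟩, hu⟩ :=
    (((hQ_pos.and (hu_sq.and hau)).filter_mono nhdsWithin_le_nhds).and
      (self_mem_nhdsWithin (s := Set.Ioi 0))).exists
  refine ⟨u, hu, hu2.le, hau, ?_⟩
  have hgap : ((1 + a * u) ^ 2) ^ 2 + (1/2) * (2 * u - u ^ 3) ^ 2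
      + (2 * u - u ^ 3) * (1 + a * u) ^ 2 - ((1 + a * u) ^ 2) ^ 2 * (1 + u) ^ 2 = u ^ 2 * Q u := by
    simp only [Q]
    ring
  nlinarith [mul_nonneg (sq_nonneg u) hQu.le]

lemma RhatX_re_lt_one {a : ℝ} (ha : 1/4 ≤ a) {h k : ℂ} (hdom : 2 * h.re + ‖k‖ ^ 2 < 0)
    (hah : (a : ℂ) * h ≠ 1) : (RhatX a h k).re < 1 := by
  have sq_re_le (z : ℂ) : z.re ^ 2 ≤ ‖z‖ ^ 2 :=
    sq_le_sq.2 ((Complex.abs_re_le_norm z).trans (le_abs_self _))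
  set u := -h.re
  have hu : 0 < u := by nlinarith [sq_nonneg ‖k‖]
  have hM : 1 + u / 2 ≤ ‖(a : ℂ) * h - 1‖ ^ 2 :=
    calc 1 + u / 2 ≤ (1 + a * u) ^ 2 := by nlinarith [mul_le_mul_of_nonneg_right ha hu.le]
      _ = ((a : ℂ) * h - 1).re ^ 2 := by simp [u]; ring
      _ ≤ ‖(a : ℂ) * h - 1‖ ^ 2 := sq_re_le _
  have hB : (1 + u) ^ 2 ≤ ‖h - 1‖ ^ 2 :=
    calc (1 + u) ^ 2 = (h - 1).re ^ 2 := by simp [u]; ring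
      _ ≤ ‖h - 1‖ ^ 2 := sq_re_le _
  have hden : 0 < ‖(a : ℂ) * h - 1‖ ^ 4 * ‖h - 1‖ ^ 2 := by
    have hA2 : 0 < ‖(a : ℂ) * h - 1‖ ^ 2 := by linarith
    have hB2 : 0 < ‖h - 1‖ ^ 2 := by nlinarith
    rw [show ‖(a : ℂ) * h - 1‖ ^ 4 = (‖(a : ℂ) * h - 1‖ ^ 2) ^ 2 by ring]
    exact mul_pos (pow_pos hA2 2) hB2
  rw [RhatX_eq a k hah, Complex.ofReal_re, div_lt_one hden]
  linarith [stability_numerator_lt_denominator hM hB hu (sq_nonneg ‖k‖) (by linarith)]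

lemma exists_one_le_RhatX_re {a : ℝ} (ha : a < 1/4) :
    ∃ h k : ℂ, 2 * h.re + ‖k‖ ^ 2 < 0 ∧ (a : ℂ) * h ≠ 1 ∧ 1 ≤ (RhatX a h k).re := by
  obtain ⟨u, hu, hu2, hau, hge⟩ := exists_stability_denominator_le_numerator ha
  have norm_sq_ofReal (x : ℝ) : ‖(x : ℂ)‖ ^ 2 = x ^ 2 := by
    rw [Complex.norm_real, Real.norm_eq_abs, sq_abs]
  set h : ℂ := ((-u : ℝ) : ℂ)
  set k : ℂ := ((√(2 * u - u ^ 3) : ℝ) : ℂ)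
  have hk : ‖k‖ ^ 2 = 2 * u - u ^ 3 := by
    rw [norm_sq_ofReal, Real.sq_sqrt (by nlinarith)]
  have hA : ‖(a : ℂ) * h - 1‖ ^ 2 = (1 + a * u) ^ 2 := by
    rw [show (a : ℂ) * h - 1 = ((a * -u - 1 : ℝ) : ℂ) by simp only [h]; push_cast; ring,
      norm_sq_ofReal]
    ring
  have hB : ‖h - 1‖ ^ 2 = (1 + u) ^ 2 := by
    rw [show h - 1 = ((-u - 1 : ℝ) : ℂ) by simp only [h]; push_cast; ring, norm_sq_ofReal]
    ring
  have hah : (a : ℂ) * h ≠ 1 := by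
    intro hah
    rw [hah, sub_self, norm_zero] at hA
    nlinarith
  refine ⟨h, k, ?_, hah, ?_⟩
  · rw [hk, Complex.ofReal_re]
    nlinarith [pow_pos hu 3]
  · have hA4 : ‖(a : ℂ) * h - 1‖ ^ 4 = ((1 + a * u) ^ 2) ^ 2 := by rw [← hA]; ring
    have hk4 : ‖k‖ ^ 4 = (2 * u - u ^ 3) ^ 2 := by rw [← hk]; ring
    have hden : 0 < ((1 + a * u) ^ 2) ^ 2 * (1 + u) ^ 2 := by
      have : 0 < 1 + a * u := by linarith
      positivity
    rw [RhatX_eq a k hah, Complex.ofReal_re, hA4, hk4, hA, hB, hk, one_le_div hden]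
    exact hge

/-- The class X mean-square stability function with a1 = a2 = a, a3 = 1,
a4 = 0 coincides with the class II stability function, and consequently it is
< 1 on the whole mean-square stability domain {2·Re(ĥ) + |k|² < 0} of the
test equation (wherever a·ĥ ≠ 1) if and only if a ≥ 1/4. -/
theorem order10_classX_diag_stability (a : ℝ) :
    (∀ h k : ℂ, (a : ℂ) * h ≠ 1 → h ≠ 1 →
      RhatX a h k
        = (((‖(a : ℂ) * h - 1‖^4 + (1/2) * ‖k‖^4 + ‖k‖^2 * ‖(a : ℂ) * h - 1‖^2)
            / (‖(a : ℂ) * h - 1‖^4 * ‖h - 1‖^2) : ℝ) : ℂ)) ∧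
    ((∀ h k : ℂ, 2 * h.re + ‖k‖^2 < 0 → (a : ℂ) * h ≠ 1 →
        (RhatX a h k).re < 1) ↔ 1/4 ≤ a) := by
  refine ⟨fun h k hah _ ↦ RhatX_eq a k hah, fun hstab ↦ ?_,
    fun ha h k hdom hah ↦ RhatX_re_lt_one ha hdom hah⟩
  by_contra! ha
  obtain ⟨h, k, hdom, hah, hge⟩ := exists_one_le_RhatX_re ha
  exact (hstab h k hdom hah).not_ge hge
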